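/- Under the standing assumption, let p⁰ ∈ S_𝓖 have all marginals positive (p⁰ᵢ(a) > 0 for every locus i and allele a). Then every differentiable solution p : [0,∞) → ℝ^𝓖_{≥0} of the recombination dynamics with p(0) = p⁰ converges, as t → ∞, to the unique strictly positive detailed-balancing equilibrium contained in the stoichiometric compatibility class S(p⁰). -/

import Mathlib

open Finset

/-- Recombination of gametes `g` and `h` following pattern `{I, Iᶜ}`:
`(g_I h_J)ᵢ = gᵢ` for `i ∈ I` and `= hᵢ` for `i ∈ J = Iᶜ`. -/
def recomb {L : Type} [DecidableEq L] {A : L → Type} (I : Finset L)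
    (g h : ∀ i, A i) : ∀ i, A i :=
  fun i => if i ∈ I then g i else h i

/-- The recombination vector field
`F(p) = (1/2) Σ_{g,h} Σ_{{I,J} ∈ 𝓟} c({I,J}) p(g) p(h) (g_I h_J + g_J h_I − g − h)`,
where the sum over unordered patterns `{I,J}` is written as `(1/2) Σ_{I : Finset L}`
(every unordered pattern `{I, Iᶜ}` corresponds to exactly two subsets `I` and `Iᶜ`;
the rate constants satisfy `c I = c Iᶜ`). -/
noncomputable def recF {L : Type} [Fintype L] [DecidableEq L] {A : L → Type}
    [∀ i, Fintype (A i)] [∀ i, DecidableEq (A i)]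
    (c : Finset L → ℝ) (p : (∀ i, A i) → ℝ) : (∀ i, A i) → ℝ :=
  fun x => (1 / 4) * ∑ g : ∀ i, A i, ∑ h : ∀ i, A i, ∑ I : Finset L,
    c I * p g * p h *
      ((if x = recomb I g h then 1 else 0) + (if x = recomb Iᶜ g h then 1 else 0)
        - (if x = g then 1 else 0) - (if x = h then 1 else 0))

/-- The marginal frequency `pᵢ(a) = Σ_{g : gᵢ = a} p(g)`. -/
noncomputable def marg {L : Type} [Fintype L] [DecidableEq L] {A : L → Type}
    [∀ i, Fintype (A i)] [∀ i, DecidableEq (A i)]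
    (p : (∀ i, A i) → ℝ) (i : L) (a : A i) : ℝ :=
  ∑ g : ∀ j, A j, if g i = a then p g else 0

/-- The stoichiometric subspace
`S = span { g_I h_J + g_J h_I − g − h : g,h ∈ 𝓖, {I,J} ∈ 𝓟 with c({I,J}) > 0 }`,
gametes being identified with standard basis vectors of `ℝ^𝓖`. -/
def stoichSpan {L : Type} [Fintype L] [DecidableEq L] (A : L → Type)
    [∀ i, Fintype (A i)] [∀ i, DecidableEq (A i)]
    (c : Finset L → ℝ) : Submodule ℝ ((∀ i, A i) → ℝ) :=
  Submodule.span ℝ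
    { v | ∃ (g h : ∀ i, A i) (I : Finset L), 0 < c I ∧
        v = fun x => (if x = recomb I g h then (1 : ℝ) else 0)
          + (if x = recomb Iᶜ g h then 1 else 0)
          - (if x = g then 1 else 0) - (if x = h then 1 else 0) }

open Filter

/-! For `S ⊆ 𝓛` write `p_S(x)` for the marginal of `p` on the loci of `S`. Marginalising the vector
field gives, along a solution of total mass one,
  `d/dt p_S = -k_S p_S + ½ ∑_{I splits S} c(I) p_{S∩I} p_{S∖I}`,  `k_S = ½ ∑_{I splits S} c(I)`,
where `I` splits `S` if it separates two loci of `S`. The standing assumption makes `k_S > 0` for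
`|S| ≥ 2`, while `p_S` is constant for `|S| ≤ 1`. By induction on `S`, every `p_S(x)` converges to
`∏_{i ∈ S} p⁰ᵢ(xᵢ)`; for `S = 𝓛` this is the limit `q`, a product measure and hence
detailed-balancing. It lies in `S(p⁰)` because the vector field takes values in the (closed)
stoichiometric subspace.

Uniqueness comes for free: a detailed-balancing `r` is an equilibrium, since the involution
`(g, h) ↦ (g_I h_J, g_J h_I)` matches gain and loss terms, so the constant solution at `r`
converges to the product of the marginals of `r`. These are the marginals of `p⁰`, as zero- and
one-locus marginals vanish on the stoichiometric subspace. -/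

open Topology

section Recombination

variable {L : Type} [DecidableEq L] {A : L → Type}

theorem recomb_apply_of_mem {I : Finset L} {i : L} (hi : i ∈ I) (g h : ∀ i, A i) :
    recomb I g h i = g i := if_pos hi

theorem recomb_apply_of_notMem {I : Finset L} {i : L} (hi : i ∉ I) (g h : ∀ i, A i) :
    recomb I g h i = h i := if_neg hi

theorem recomb_empty (g h : ∀ i, A i) : recomb ∅ g h = h := by
  funext i; simp [recomb]

variable [Fintype L]

theorem recomb_recomb_recomb_compl (I : Finset L) (g h : ∀ i, A i) :
    recomb I (recomb I g h) (recomb Iᶜ g h) = g := by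
  funext i; by_cases hi : i ∈ I <;> simp [recomb, hi]

theorem recomb_compl_recomb_recomb_compl (I : Finset L) (g h : ∀ i, A i) :
    recomb Iᶜ (recomb I g h) (recomb Iᶜ g h) = h := by
  funext i; by_cases hi : i ∈ I <;> simp [recomb, hi]

theorem recomb_univ (g h : ∀ i, A i) : recomb univ g h = g := by
  funext i; simp [recomb]

end Recombination

section Marginals

variable {L : Type} [Fintype L] [DecidableEq L] {A : L → Type}
    [∀ i, Fintype (A i)] [∀ i, DecidableEq (A i)]

noncomputable def margOn (S : Finset L) (x : ∀ i, A i) : ((∀ i, A i) → ℝ) →ₗ[ℝ] ℝ where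
  toFun p := ∑ g, if ∀ i ∈ S, g i = x i then p g else 0
  map_add' p q := by simp only [Pi.add_apply, ← Finset.sum_add_distrib, ite_add_zero]
  map_smul' a p := by simp [Finset.mul_sum]

theorem margOn_apply (S : Finset L) (x : ∀ i, A i) (p : (∀ i, A i) → ℝ) :
    margOn S x p = ∑ g, if ∀ i ∈ S, g i = x i then p g else 0 := rfl

theorem margOn_empty (x : ∀ i, A i) (p : (∀ i, A i) → ℝ) : margOn ∅ x p = ∑ g, p g := by
  simp [margOn_apply]

theorem margOn_singleton (i : L) (x : ∀ i, A i) (p : (∀ i, A i) → ℝ) :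
    margOn {i} x p = marg p i (x i) := by
  simp [margOn_apply, marg]

theorem margOn_univ (x : ∀ i, A i) (p : (∀ i, A i) → ℝ) : margOn univ x p = p x := by
  simp [margOn_apply, ← funext_iff]

theorem margOn_eq_prod_marg_of_card_le_one {S : Finset L} (hS : S.card ≤ 1) (x : ∀ i, A i)
    {p : (∀ i, A i) → ℝ} (hp : ∑ g, p g = 1) : margOn S x p = ∏ i ∈ S, marg p i (x i) := by
  rcases Nat.le_one_iff_eq_zero_or_eq_one.mp hS with hS | hS
  · rw [Finset.card_eq_zero.mp hS, margOn_empty, hp, Finset.prod_empty]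
  · obtain ⟨i, rfl⟩ := Finset.card_eq_one.mp hS
    rw [margOn_singleton, Finset.prod_singleton]

theorem margOn_inter_mul_margOn_sdiff (S I : Finset L) (x : ∀ i, A i) (p : (∀ i, A i) → ℝ) :
    margOn (S ∩ I) x p * margOn (S \ I) x p
      = ∑ g, ∑ h, if ∀ i ∈ S, recomb I g h i = x i then p g * p h else 0 := by
  simp only [margOn_apply, Finset.sum_mul_sum, ite_zero_mul_ite_zero]
  refine Finset.sum_congr rfl fun g _ => Finset.sum_congr rfl fun h _ => if_congr ?_ rfl rfl
  constructor
  · rintro ⟨hg, hh⟩ i hi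
    by_cases hiI : i ∈ I
    · rw [recomb_apply_of_mem hiI]; exact hg i (Finset.mem_inter.2 ⟨hi, hiI⟩)
    · rw [recomb_apply_of_notMem hiI]; exact hh i (Finset.mem_sdiff.2 ⟨hi, hiI⟩)
  · intro H
    refine ⟨fun i hi => ?_, fun i hi => ?_⟩
    · rw [Finset.mem_inter] at hi; simpa [recomb_apply_of_mem hi.2] using H i hi.1
    · rw [Finset.mem_sdiff] at hi; simpa [recomb_apply_of_notMem hi.2] using H i hi.1

def recVec (I : Finset L) (g h : ∀ i, A i) : (∀ i, A i) → ℝ := fun x =>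
  (if x = recomb I g h then (1 : ℝ) else 0) + (if x = recomb Iᶜ g h then 1 else 0)
    - (if x = g then 1 else 0) - (if x = h then 1 else 0)

theorem recF_eq_sum (c : Finset L → ℝ) (p : (∀ i, A i) → ℝ) :
    recF c p = (1 / 4 : ℝ) • ∑ g, ∑ h, ∑ I, (c I * p g * p h) • recVec I g h := by
  funext x
  simp [recF, recVec, Finset.sum_apply]

theorem margOn_indicator (S : Finset L) (x g : ∀ i, A i) :
    margOn S x (fun y => if y = g then 1 else 0) = if ∀ i ∈ S, g i = x i then 1 else 0 := by
  rw [margOn_apply, Fintype.sum_eq_single g fun y hy => by simp [hy]]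
  simp

theorem margOn_recVec (S I : Finset L) (x g h : ∀ i, A i) :
    margOn S x (recVec I g h)
      = (if ∀ i ∈ S, recomb I g h i = x i then 1 else 0)
        + (if ∀ i ∈ S, recomb Iᶜ g h i = x i then 1 else 0)
        - (if ∀ i ∈ S, g i = x i then 1 else 0) - (if ∀ i ∈ S, h i = x i then 1 else 0) := by
  have hsplit : recVec I g h = (fun y => if y = recomb I g h then 1 else 0)
      + (fun y => if y = recomb Iᶜ g h then 1 else 0)
      - (fun y => if y = g then 1 else 0) - (fun y => if y = h then 1 else 0) := rfl
  simp only [hsplit, map_add, map_sub, margOn_indicator]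

theorem margOn_recF (c : Finset L → ℝ) (S : Finset L) (x : ∀ i, A i) (p : (∀ i, A i) → ℝ) :
    margOn S x (recF c p)
      = (1 / 2) * ∑ I, c I * (margOn (S ∩ I) x p * margOn (S \ I) x p
          - margOn ∅ x p * margOn S x p) := by
  have hpair : ∀ J, ∑ g, ∑ h, p g * p h * (if ∀ i ∈ S, recomb J g h i = x i then 1 else 0)
      = margOn (S ∩ J) x p * margOn (S \ J) x p := fun J => by
    simp only [margOn_inter_mul_margOn_sdiff, mul_ite, mul_one, mul_zero]
  have hleft : ∑ g, ∑ h, p g * p h * (if ∀ i ∈ S, g i = x i then 1 else 0)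
      = margOn S x p * margOn ∅ x p := by
    simpa [recomb_univ, Finset.sdiff_eq_empty_iff_subset.2 (Finset.subset_univ S)] using hpair univ
  have hright : ∑ g, ∑ h, p g * p h * (if ∀ i ∈ S, h i = x i then 1 else 0)
      = margOn ∅ x p * margOn S x p := by
    simpa [recomb_empty] using hpair ∅
  have hcompl : ∀ I, margOn (S ∩ Iᶜ) x p * margOn (S \ Iᶜ) x p
      = margOn (S ∩ I) x p * margOn (S \ I) x p := fun I => by
    rw [mul_comm, Finset.sdiff_eq_inter_compl, Finset.sdiff_eq_inter_compl, compl_compl]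
  have hterm : ∀ I, ∑ g, ∑ h, p g * p h *
      ((if ∀ i ∈ S, recomb I g h i = x i then 1 else 0)
        + (if ∀ i ∈ S, recomb Iᶜ g h i = x i then 1 else 0)
        - (if ∀ i ∈ S, g i = x i then 1 else 0) - (if ∀ i ∈ S, h i = x i then 1 else 0))
      = 2 * (margOn (S ∩ I) x p * margOn (S \ I) x p - margOn ∅ x p * margOn S x p) := by
    intro I
    simp only [mul_add, mul_sub, Finset.sum_add_distrib, Finset.sum_sub_distrib, hpair, hleft,
      hright, hcompl]
    ring
  rw [recF_eq_sum]
  simp only [map_smul, map_sum, smul_eq_mul, margOn_recVec]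
  rw [Finset.sum_congr rfl fun g _ => Finset.sum_comm, Finset.sum_comm, Finset.mul_sum,
    Finset.mul_sum]
  refine Finset.sum_congr rfl fun I _ => ?_
  convert congrArg (fun y => 1 / 4 * (c I * y)) (hterm I) using 1
  · simp only [Finset.mul_sum]
    exact Finset.sum_congr rfl fun g _ => Finset.sum_congr rfl fun h _ => by ring
  · ring

end Marginals

section StoichiometricSpace

variable {L : Type} [Fintype L] [DecidableEq L] {A : L → Type}
    [∀ i, Fintype (A i)] [∀ i, DecidableEq (A i)]

theorem recF_mem_stoichSpan {c : Finset L → ℝ} (hc : ∀ I, 0 ≤ c I) (p : (∀ i, A i) → ℝ) :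
    recF c p ∈ stoichSpan A c := by
  rw [recF_eq_sum]
  refine Submodule.smul_mem _ _ (Submodule.sum_mem _ fun g _ => Submodule.sum_mem _ fun h _ =>
    Submodule.sum_mem _ fun I _ => ?_)
  rcases (hc I).lt_or_eq with hI | hI
  · exact Submodule.smul_mem _ _ (Submodule.subset_span ⟨g, h, I, hI, rfl⟩)
  · simp [← hI]

theorem margOn_eq_zero_of_mem_stoichSpan {c : Finset L → ℝ} {S : Finset L} (hS : S.card ≤ 1)
    (x : ∀ i, A i) {v : (∀ i, A i) → ℝ} (hv : v ∈ stoichSpan A c) : margOn S x v = 0 := by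
  refine (Submodule.span_le.2 ?_ hv : v ∈ LinearMap.ker (margOn S x))
  rintro _ ⟨g, h, I, -, rfl⟩
  change margOn S x (recVec I g h) = 0
  rcases Nat.le_one_iff_eq_zero_or_eq_one.mp hS with hS | hS
  · simp [Finset.card_eq_zero.mp hS, margOn_recVec]
  · obtain ⟨i, rfl⟩ := Finset.card_eq_one.mp hS
    by_cases hi : i ∈ I <;> simp [margOn_recVec, recomb, hi]

end StoichiometricSpace

section DetailedBalance

variable {L : Type} [Fintype L] [DecidableEq L] {A : L → Type}

def IsDetailedBalanced (c : Finset L → ℝ) (r : (∀ i, A i) → ℝ) : Prop :=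
  ∀ (g h : ∀ i, A i) (I : Finset L), 0 < c I → r g * r h = r (recomb I g h) * r (recomb Iᶜ g h)

theorem isDetailedBalanced_prod (c : Finset L → ℝ) (f : ∀ i, A i → ℝ) :
    IsDetailedBalanced c fun g => ∏ i, f i (g i) := by
  intro g h I _
  simp only [← Finset.prod_mul_distrib]
  refine Finset.prod_congr rfl fun i _ => ?_
  by_cases hi : i ∈ I <;> simp [recomb, hi, mul_comm]

def recombPerm (I : Finset L) : Equiv.Perm ((∀ i, A i) × (∀ i, A i)) :=
  Function.Involutive.toPerm (fun gh => (recomb I gh.1 gh.2, recomb Iᶜ gh.1 gh.2)) fun gh => by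
    simp [recomb_recomb_recomb_compl, recomb_compl_recomb_recomb_compl]

theorem recombPerm_apply (I : Finset L) (g h : ∀ i, A i) :
    recombPerm I (g, h) = (recomb I g h, recomb Iᶜ g h) := rfl

variable [∀ i, Fintype (A i)] [∀ i, DecidableEq (A i)]

theorem recF_eq_zero_of_isDetailedBalanced {c : Finset L → ℝ} (hc : ∀ I, 0 ≤ c I)
    {r : (∀ i, A i) → ℝ} (hr : IsDetailedBalanced c r) : recF c r = 0 := by
  rw [recF_eq_sum, Finset.sum_congr rfl fun g _ => Finset.sum_comm, Finset.sum_comm]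
  refine smul_eq_zero_of_right _ (Finset.sum_eq_zero fun I _ => ?_)
  rcases (hc I).lt_or_eq with hI | hI
  · funext x
    let G : (∀ i, A i) × (∀ i, A i) → ℝ := fun gh =>
      r gh.1 * r gh.2 * ((if x = gh.1 then 1 else 0) + (if x = gh.2 then 1 else 0))
    simp only [Finset.sum_apply, Pi.smul_apply, smul_eq_mul, Pi.zero_apply]
    rw [← Fintype.sum_prod_type']
    calc ∑ gh : (∀ i, A i) × (∀ i, A i), c I * r gh.1 * r gh.2 * recVec I gh.1 gh.2 x
        = c I * ∑ gh, (G (recombPerm I gh) - G gh) := by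
          rw [Finset.mul_sum]
          refine Finset.sum_congr rfl fun ⟨g, h⟩ _ => ?_
          simp only [G, recombPerm_apply, ← hr g h I hI, recVec]
          ring
      _ = 0 := by rw [Finset.sum_sub_distrib, Equiv.sum_comp, sub_self, mul_zero]
  · simp [← hI]

end DetailedBalance

theorem LinearMap.hasDerivAt_comp {V W : Type*} [NormedAddCommGroup V] [NormedSpace ℝ V]
    [FiniteDimensional ℝ V] [NormedAddCommGroup W] [NormedSpace ℝ W] (φ : V →ₗ[ℝ] W)
    {f : ℝ → V} {f' : V} {t : ℝ} (hf : HasDerivAt f f' t) :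
    HasDerivAt (fun s => φ (f s)) (φ f') t :=
  (LinearMap.toContinuousLinearMap φ).hasFDerivAt.comp_hasDerivAt t hf

theorem eq_of_hasDerivAt_zero {E : Type*} [NormedAddCommGroup E] [NormedSpace ℝ E]
    {f : ℝ → E} (hf : ∀ t, 0 ≤ t → HasDerivAt f 0 t) {t : ℝ} (ht : 0 ≤ t) : f t = f 0 :=
  constant_of_has_deriv_right_zero (fun s hs => (hf s hs.1).continuousAt.continuousWithinAt)
    (fun s hs => (hf s hs.1).hasDerivWithinAt) t ⟨ht, le_rfl⟩

theorem sub_mem_of_hasDerivAt_mem {V : Type*} [NormedAddCommGroup V] [NormedSpace ℝ V]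
    [FiniteDimensional ℝ V] (W : Submodule ℝ V) {f f' : ℝ → V}
    (hf : ∀ t, 0 ≤ t → HasDerivAt f (f' t) t) (hW : ∀ t, 0 ≤ t → f' t ∈ W) {t : ℝ}
    (ht : 0 ≤ t) : f t - f 0 ∈ W := by
  by_contra hnot
  obtain ⟨φ, hφ, hWφ⟩ := Submodule.exists_le_ker_of_notMem hnot
  have hconst : ∀ s, 0 ≤ s → HasDerivAt (fun s => φ (f s)) 0 s := fun s hs => by
    simpa [LinearMap.mem_ker.1 (hWφ (hW s hs))] using φ.hasDerivAt_comp (hf s hs)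
  exact hφ (by rw [map_sub, eq_of_hasDerivAt_zero hconst ht, sub_self])

theorem eventually_lt_of_hasDerivAt_le {k m a : ℝ} (hk : 0 < k) (hma : m < a) {v v' : ℝ → ℝ}
    (hv : ∀ᶠ t in atTop, HasDerivAt v (v' t) t ∧ v' t ≤ k * (m - v t)) :
    ∀ᶠ t in atTop, v t < a := by
  obtain ⟨T, hT⟩ := eventually_atTop.1 hv
  let w : ℝ → ℝ := fun t => (v t - m) * Real.exp (k * t)
  have hw : ∀ t, T ≤ t → HasDerivAt w ((v' t + k * (v t - m)) * Real.exp (k * t)) t := by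
    intro t ht
    have hexp : HasDerivAt (fun s => Real.exp (k * s)) (Real.exp (k * t) * k) t := by
      simpa using ((hasDerivAt_id t).const_mul k).exp
    exact (((hT t ht).1.sub_const m).mul hexp).congr_deriv (by ring)
  have hanti : AntitoneOn w (Set.Ici T) := by
    refine antitoneOn_of_hasDerivWithinAt_nonpos (convex_Ici T)
      (fun t ht => (hw t ht).continuousAt.continuousWithinAt)
      (fun t ht => (hw t (interior_subset ht)).hasDerivWithinAt) fun t ht => ?_
    have hv't := (hT t (interior_subset ht)).2
    exact mul_nonpos_of_nonpos_of_nonneg (by linarith) (Real.exp_pos _).le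
  have hdecay : Tendsto (fun t => m + w T * Real.exp (-(k * t))) atTop (𝓝 m) := by
    simpa using ((Real.tendsto_exp_neg_atTop_nhds_zero.comp
      (tendsto_id.const_mul_atTop hk)).const_mul (w T)).const_add m
  filter_upwards [eventually_ge_atTop T, hdecay.eventually_lt_const hma] with t ht hlt
  refine lt_of_le_of_lt ?_ hlt
  have hwt : w t ≤ w T := hanti Set.self_mem_Ici ht ht
  rw [Real.exp_neg, ← div_eq_mul_inv, ← sub_le_iff_le_add', le_div_iff₀ (Real.exp_pos _)]
  exact hwt

theorem tendsto_of_hasDerivAt_eq_neg_mul_add {k m : ℝ} (hk : 0 < k) {u b : ℝ → ℝ}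
    (hu : ∀ᶠ t in atTop, HasDerivAt u (-k * u t + b t) t)
    (hb : Tendsto b atTop (𝓝 (k * m))) : Tendsto u atTop (𝓝 m) := by
  refine tendsto_order.2 ⟨fun a ha => ?_, fun a ha => ?_⟩
  · obtain ⟨m', ham', hm'm⟩ := exists_between ha
    have hlt := eventually_lt_of_hasDerivAt_le (v := fun t => -u t) hk (neg_lt_neg ham') <|
      (hu.and (hb.eventually_const_lt (mul_lt_mul_of_pos_left hm'm hk))).mono
        fun t ⟨hd, hbt⟩ => ⟨hd.neg, by linarith⟩
    exact hlt.mono fun t ht => neg_lt_neg_iff.1 ht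
  · obtain ⟨m', hmm', hm'a⟩ := exists_between ha
    exact eventually_lt_of_hasDerivAt_le hk hm'a <|
      (hu.and (hb.eventually_lt_const (mul_lt_mul_of_pos_left hmm' hk))).mono
        fun t ⟨hd, hbt⟩ => ⟨hd, by linarith⟩

section Convergence

variable {L : Type} [Fintype L] [DecidableEq L] {A : L → Type}

def splitters (S : Finset L) : Finset (Finset L) :=
  univ.filter fun I => (S ∩ I).Nonempty ∧ (S \ I).Nonempty

theorem splitters_eq_empty {S : Finset L} (hS : S.card ≤ 1) : splitters S = ∅ := by
  refine Finset.filter_eq_empty_iff.2 fun I _ ⟨⟨i, hi⟩, ⟨j, hj⟩⟩ => hS.not_gt ?_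
  rw [Finset.mem_inter] at hi
  rw [Finset.mem_sdiff] at hj
  exact Finset.one_lt_card.2 ⟨i, hi.1, j, hj.1, fun hij => hj.2 (hij ▸ hi.2)⟩

theorem sum_splitters_pos {c : Finset L → ℝ} (hc : ∀ I, 0 ≤ c I)
    (hsep : ∀ i j : L, i ≠ j →
      0 < ∑ I ∈ univ.filter (fun I : Finset L => i ∈ I ∧ j ∉ I), c I)
    {S : Finset L} (hS : 1 < S.card) : 0 < ∑ I ∈ splitters S, c I := by
  obtain ⟨i, hi, j, hj, hij⟩ := Finset.one_lt_card.1 hS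
  refine (hsep i j hij).trans_le (Finset.sum_le_sum_of_subset_of_nonneg ?_ fun I _ _ => hc I)
  intro I hI
  obtain ⟨hiI, hjI⟩ := (Finset.mem_filter.1 hI).2
  exact Finset.mem_filter.2 ⟨Finset.mem_univ I, ⟨i, Finset.mem_inter.2 ⟨hi, hiI⟩⟩,
    ⟨j, Finset.mem_sdiff.2 ⟨hj, hjI⟩⟩⟩

theorem inter_ssubset_of_mem_splitters {S I : Finset L} (hI : I ∈ splitters S) : S ∩ I ⊂ S := by
  obtain ⟨i, hi⟩ := (Finset.mem_filter.1 hI).2.2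
  rw [Finset.mem_sdiff] at hi
  exact (Finset.ssubset_iff_of_subset Finset.inter_subset_left).2
    ⟨i, hi.1, fun h => hi.2 (Finset.mem_inter.1 h).2⟩

theorem sdiff_ssubset_of_mem_splitters {S I : Finset L} (hI : I ∈ splitters S) : S \ I ⊂ S := by
  obtain ⟨i, hi⟩ := (Finset.mem_filter.1 hI).2.1
  rw [Finset.mem_inter] at hi
  exact (Finset.ssubset_iff_of_subset Finset.sdiff_subset).2
    ⟨i, hi.1, fun h => (Finset.mem_sdiff.1 h).2 hi.2⟩

variable [∀ i, Fintype (A i)] [∀ i, DecidableEq (A i)]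

theorem margOn_recF_eq_sum_splitters (c : Finset L → ℝ) (S : Finset L) (x : ∀ i, A i)
    (p : (∀ i, A i) → ℝ) :
    margOn S x (recF c p)
      = (1 / 2) * ∑ I ∈ splitters S, c I * (margOn (S ∩ I) x p * margOn (S \ I) x p
          - margOn ∅ x p * margOn S x p) := by
  rw [margOn_recF, splitters, Finset.sum_filter_of_ne]
  intro I _ hne
  by_contra hsplit
  rcases not_and_or.1 hsplit with h | h <;> rw [Finset.not_nonempty_iff_eq_empty] at h
  · rw [h, Finset.sdiff_eq_self_iff_disjoint.2 (Finset.disjoint_iff_inter_eq_empty.2 h),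
      sub_self, mul_zero] at hne
    exact hne rfl
  · rw [h, Finset.inter_eq_left.2 (Finset.sdiff_eq_empty_iff_subset.1 h), mul_comm (margOn S x p),
      sub_self, mul_zero] at hne
    exact hne rfl

theorem tendsto_margOn_of_hasDerivAt {c : Finset L → ℝ} (hc : ∀ I, 0 ≤ c I)
    (hsep : ∀ i j : L, i ≠ j →
      0 < ∑ I ∈ univ.filter (fun I : Finset L => i ∈ I ∧ j ∉ I), c I)
    {p : ℝ → (∀ i, A i) → ℝ} (hode : ∀ t, 0 ≤ t → HasDerivAt p (recF c (p t)) t)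
    (hp1 : ∑ g, p 0 g = 1) (S : Finset L) (x : ∀ i, A i) :
    Tendsto (fun t => margOn S x (p t)) atTop (𝓝 (∏ i ∈ S, marg (p 0) i (x i))) := by
  have hderiv : ∀ S t, 0 ≤ t →
      HasDerivAt (fun τ => margOn S x (p τ)) (margOn S x (recF c (p t))) t :=
    fun S t ht => (margOn S x).hasDerivAt_comp (hode t ht)
  have hmass : ∀ t, 0 ≤ t → margOn ∅ x (p t) = 1 := fun t ht => by
    have hconst : ∀ s, 0 ≤ s → HasDerivAt (fun τ => margOn ∅ x (p τ)) 0 s := fun s hs => by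
      simpa [margOn_recF] using hderiv ∅ s hs
    rw [eq_of_hasDerivAt_zero hconst ht, margOn_empty, hp1]
  induction S using Finset.strongInduction with | H S IH => ?_
  rcases le_or_gt S.card 1 with hS | hS
  · have hconst : ∀ t, 0 ≤ t → HasDerivAt (fun τ => margOn S x (p τ)) 0 t := fun t ht => by
      simpa [margOn_recF_eq_sum_splitters, splitters_eq_empty hS] using hderiv S t ht
    rw [← margOn_eq_prod_marg_of_card_le_one hS x hp1]
    refine tendsto_const_nhds.congr' ?_
    filter_upwards [eventually_ge_atTop 0] with t ht
    exact (eq_of_hasDerivAt_zero hconst ht).symm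
  · -- Below `S`, the marginals converge by induction; they drive a stable linear ODE for `S`.
    set k := (1 / 2) * ∑ I ∈ splitters S, c I
    refine tendsto_of_hasDerivAt_eq_neg_mul_add (k := k) (b := fun t => (1 / 2) *
      ∑ I ∈ splitters S, c I * (margOn (S ∩ I) x (p t) * margOn (S \ I) x (p t)))
      (mul_pos one_half_pos (sum_splitters_pos hc hsep hS)) ?_ ?_
    · filter_upwards [eventually_ge_atTop 0] with t ht
      refine (hderiv S t ht).congr_deriv ?_
      rw [margOn_recF_eq_sum_splitters, hmass t ht]
      simp only [k, mul_sub, Finset.sum_sub_distrib, one_mul]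
      rw [← Finset.sum_mul]
      ring
    · have hlim : k * ∏ i ∈ S, marg (p 0) i (x i) = (1 / 2) * ∑ I ∈ splitters S,
          c I * ((∏ i ∈ S ∩ I, marg (p 0) i (x i)) * ∏ i ∈ S \ I, marg (p 0) i (x i)) := by
        simp only [k, Finset.prod_inter_mul_prod_sdiff, Finset.sum_mul, mul_assoc]
      rw [hlim]
      exact (tendsto_finsetSum _ fun I hI => ((IH _ (inter_ssubset_of_mem_splitters hI)).mul
        (IH _ (sdiff_ssubset_of_mem_splitters hI))).const_mul (c I)).const_mul _

theorem tendsto_prod_marg_of_hasDerivAt {c : Finset L → ℝ} (hc : ∀ I, 0 ≤ c I)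
    (hsep : ∀ i j : L, i ≠ j →
      0 < ∑ I ∈ univ.filter (fun I : Finset L => i ∈ I ∧ j ∉ I), c I)
    {p : ℝ → (∀ i, A i) → ℝ} (hode : ∀ t, 0 ≤ t → HasDerivAt p (recF c (p t)) t)
    (hp1 : ∑ g, p 0 g = 1) :
    Tendsto p atTop (𝓝 fun g => ∏ i, marg (p 0) i (g i)) :=
  tendsto_pi_nhds.2 fun x => by
    simpa [margOn_univ] using tendsto_margOn_of_hasDerivAt hc hsep hode hp1 univ x

theorem eq_prod_marg_of_isDetailedBalanced {c : Finset L → ℝ} (hc : ∀ I, 0 ≤ c I)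
    (hsep : ∀ i j : L, i ≠ j →
      0 < ∑ I ∈ univ.filter (fun I : Finset L => i ∈ I ∧ j ∉ I), c I)
    {r : (∀ i, A i) → ℝ} (hr1 : ∑ g, r g = 1) (hr : IsDetailedBalanced c r) :
    r = fun g => ∏ i, marg r i (g i) := by
  -- `r` is an equilibrium, so the constant solution at `r` tends to the product of its marginals.
  have hode : ∀ t, 0 ≤ t → HasDerivAt (fun _ : ℝ => r) (recF c r) t := fun t _ => by
    simpa [recF_eq_zero_of_isDetailedBalanced hc hr] using hasDerivAt_const t r
  exact tendsto_nhds_unique tendsto_const_nhds (tendsto_prod_marg_of_hasDerivAt hc hsep hode hr1)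

end Convergence

theorem convergence_to_detailed_balancing_equilibrium_general
    {L : Type} [Fintype L] [DecidableEq L]
    (A : L → Type) [∀ i, Fintype (A i)] [∀ i, DecidableEq (A i)]
    (c : Finset L → ℝ) (hc : ∀ I, 0 ≤ c I)
    (hsep : ∀ i j : L, i ≠ j →
      0 < ∑ I ∈ univ.filter (fun I : Finset L => i ∈ I ∧ j ∉ I), c I)
    (p₀ : (∀ i, A i) → ℝ) (hp1 : ∑ g : ∀ i, A i, p₀ g = 1)
    (hm : ∀ (i : L) (a : A i), 0 < marg p₀ i a)
    (p : ℝ → (∀ i, A i) → ℝ)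
    (hode : ∀ t, 0 ≤ t → HasDerivAt p (recF c (p t)) t)
    (hinit : p 0 = p₀) :
    ∃ q : (∀ i, A i) → ℝ,
      ((∀ g, 0 < q g) ∧ (q - p₀ ∈ stoichSpan A c) ∧
        (∀ (g h : ∀ i, A i) (I : Finset L), 0 < c I →
          q g * q h = q (recomb I g h) * q (recomb Iᶜ g h))) ∧
      (∀ r : (∀ i, A i) → ℝ, (∀ g, 0 < r g) → r - p₀ ∈ stoichSpan A c →
        (∀ (g h : ∀ i, A i) (I : Finset L), 0 < c I →
          r g * r h = r (recomb I g h) * r (recomb Iᶜ g h)) → r = q) ∧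
      Tendsto p atTop (nhds q) := by
  subst hinit
  have hconv := tendsto_prod_marg_of_hasDerivAt hc hsep hode hp1
  have hclass : ∀ t, 0 ≤ t → p t - p 0 ∈ stoichSpan A c := fun t ht =>
    sub_mem_of_hasDerivAt_mem _ hode (fun s _ => recF_mem_stoichSpan hc (p s)) ht
  refine ⟨_, ⟨fun g => Finset.prod_pos fun i _ => hm i (g i), ?_, isDetailedBalanced_prod c _⟩,
    fun r _ hrS hr => ?_, hconv⟩
  · exact (Submodule.closed_of_finiteDimensional _).mem_of_tendsto (hconv.sub_const (p 0))
      ((eventually_ge_atTop 0).mono hclass)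
  · funext g
    have hmarg : ∀ S : Finset L, S.card ≤ 1 → margOn S g r = margOn S g (p 0) := fun S hS =>
      sub_eq_zero.1 (by rw [← map_sub]; exact margOn_eq_zero_of_mem_stoichSpan hS g hrS)
    have hr1 : ∑ g, r g = 1 := by
      rw [← margOn_empty g, hmarg ∅ (by simp), margOn_empty, hp1]
    rw [eq_prod_marg_of_isDetailedBalanced hc hsep hr1 hr]
    exact Finset.prod_congr rfl fun i _ => by
      simpa only [margOn_singleton] using hmarg {i} (Finset.card_singleton i).le

/-- **Global convergence in the stoichiometric compatibility class (Theorem 6).**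
Under the standing assumption, if the initial condition `p⁰ ∈ S_𝓖` has all marginals
positive, then every differentiable nonnegative solution of the recombination dynamics
starting at `p⁰` converges, as `t → ∞`, to the unique strictly positive
detailed-balancing equilibrium contained in the stoichiometric compatibility class
`S(p⁰) = (p⁰ + S) ∩ ℝ^𝓖₊`. -/
theorem convergence_to_detailed_balancing_equilibrium
    {L : Type} [Fintype L] [DecidableEq L] [Nonempty L]
    (A : L → Type) [∀ i, Fintype (A i)] [∀ i, DecidableEq (A i)]
    (hA : ∀ i, 2 ≤ Fintype.card (A i))
    (c : Finset L → ℝ) (hc : ∀ I, 0 ≤ c I) (hcsym : ∀ I, c I = c Iᶜ)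
    (hsep : ∀ i j : L, i ≠ j →
      0 < ∑ I ∈ univ.filter (fun I : Finset L => i ∈ I ∧ j ∉ I), c I)
    (p₀ : (∀ i, A i) → ℝ) (hp0 : ∀ g, 0 ≤ p₀ g) (hp1 : ∑ g : ∀ i, A i, p₀ g = 1)
    (hm : ∀ (i : L) (a : A i), 0 < marg p₀ i a)
    (p : ℝ → (∀ i, A i) → ℝ)
    (hnn : ∀ t, 0 ≤ t → ∀ g, 0 ≤ p t g)
    (hode : ∀ t, 0 ≤ t → HasDerivAt p (recF c (p t)) t)
    (hinit : p 0 = p₀) :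
    ∃ q : (∀ i, A i) → ℝ,
      ((∀ g, 0 < q g) ∧ (q - p₀ ∈ stoichSpan A c) ∧
        (∀ (g h : ∀ i, A i) (I : Finset L), 0 < c I →
          q g * q h = q (recomb I g h) * q (recomb Iᶜ g h))) ∧
      (∀ r : (∀ i, A i) → ℝ, (∀ g, 0 < r g) → r - p₀ ∈ stoichSpan A c →
        (∀ (g h : ∀ i, A i) (I : Finset L), 0 < c I →
          r g * r h = r (recomb I g h) * r (recomb Iᶜ g h)) → r = q) ∧
      Tendsto p atTop (nhds q) :=
  convergence_to_detailed_balancing_equilibrium_general A c hc hsep p₀ hp1 hm p hode hinit
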